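/- Let k ≥ 1 be a natural number. For each index j ∈ {1,…,k}, let a_j : ℕ → ℝ be a sequence of acquisition values and n_j : ℕ → ℕ a sequence of component sample counts with n_j(0) ≥ 1. Assume there are constants 0 < ε ≤ M such that ε ≤ a_j(t) ≤ M for all j and all t. Assume the sequential sampling rule: at each step t there is a selected index σ(t) attaining the maximum over j of the weighted acquisition value a_j(t)/n_j(t), and the counts update as n_{σ(t)}(t+1) = n_{σ(t)}(t) + 1 while n_j(t+1) = n_j(t) for every j ≠ σ(t). Then for every index j, the count n_j(t) tends to infinity as t → ∞; in particular min_{j=1,…,k} n_j(t) → ∞. -/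
import Mathlib


open Filter

/-- Under the weighted-acquisition sequential sampling rule, every component is
sampled infinitely often: each count `n j t → ∞`, and in particular the minimum
count over all components tends to infinity. -/
theorem weighted_acquisition_counts_tendsto_atTop
    (k : ℕ) (hk : 1 ≤ k)
    (a : Fin k → ℕ → ℝ) (n : Fin k → ℕ → ℕ) (σ : ℕ → Fin k)
    (ε M : ℝ) (hε : 0 < ε) (hεM : ε ≤ M)
    (hbound : ∀ j t, ε ≤ a j t ∧ a j t ≤ M)
    (hn0 : ∀ j, 1 ≤ n j 0)
    (hsel : ∀ t j, a j t / (n j t : ℝ) ≤ a (σ t) t / (n (σ t) t : ℝ))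
    (hupd_sel : ∀ t, n (σ t) (t + 1) = n (σ t) t + 1)
    (hupd_other : ∀ t j, j ≠ σ t → n j (t + 1) = n j t) :
    (∀ j, Tendsto (fun t => n j t) atTop atTop) ∧
      Tendsto
        (fun t =>
          Finset.univ.inf' (Finset.univ_nonempty_iff.mpr ⟨⟨0, hk⟩⟩)
            (fun j => n j t))
        atTop atTop := by
  -- monotonicity of each count
  have hmono : ∀ j, Monotone (n j) := by
    intro j
    apply monotone_nat_of_le_succ
    intro t
    by_cases h : j = σ t
    · subst h; rw [hupd_sel t]; omega
    · rw [hupd_other t j h]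
  have hpos : ∀ j t, 1 ≤ n j t := fun j t => (hn0 j).trans (hmono j (Nat.zero_le t))
  -- the total count grows by exactly one each step
  have hsum : ∀ t, ∑ j, n j t = t + ∑ j, n j 0 := by
    intro t
    induction t with
    | zero => simp
    | succ t ih =>
      have h1 : ∑ j, n j (t + 1) = ∑ j, (n j t + if j = σ t then 1 else 0) := by
        apply Finset.sum_congr rfl
        intro j _
        by_cases h : j = σ t
        · subst h; simp [hupd_sel t]
        · simp [hupd_other t j h, h]
      rw [h1, Finset.sum_add_distrib, Finset.sum_ite_eq' Finset.univ (σ t)]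
      simp only [Finset.mem_univ, if_true, ih]
      omega
  -- key unboundedness claim
  have hkey : ∀ j b, ∃ t, b ≤ n j t := by
    intro j b
    by_contra hcon
    push_neg at hcon
    set B : ℕ := max b 1 with hB
    have hjB : ∀ t, n j t ≤ B := by
      intro t
      have := hcon t
      omega
    have hB1 : (1 : ℝ) ≤ (B : ℝ) := by exact_mod_cast Nat.le_max_right b 1
    have hBpos : (0 : ℝ) < B := by linarith
    -- the selected count is always bounded by C
    set C : ℕ := ⌈M * B / ε⌉₊ with hC
    have hselbd : ∀ t, n (σ t) t ≤ C := by
      intro t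
      have hnjt : (0 : ℝ) < (n j t : ℝ) := by exact_mod_cast hpos j t
      have hnσ : (0 : ℝ) < (n (σ t) t : ℝ) := by exact_mod_cast hpos (σ t) t
      have h1 : ε / (B : ℝ) ≤ ε / (n j t : ℝ) := by
        apply div_le_div_of_nonneg_left hε.le hnjt
        exact_mod_cast hjB t
      have h2 : ε / (n j t : ℝ) ≤ a j t / (n j t : ℝ) :=
        div_le_div_of_nonneg_right (hbound j t).1 hnjt.le |>.trans_eq rfl
      have h3 : a (σ t) t / (n (σ t) t : ℝ) ≤ M / (n (σ t) t : ℝ) :=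
        div_le_div_of_nonneg_right (hbound (σ t) t).2 hnσ.le
      have h4 : ε / (B : ℝ) ≤ M / (n (σ t) t : ℝ) :=
        h1.trans (h2.trans ((hsel t j).trans h3))
      have h5 : (n (σ t) t : ℝ) ≤ M * B / ε := by
        rw [div_le_div_iff₀ hBpos hnσ] at h4
        rw [le_div_iff₀ hε]
        nlinarith
      have := h5.trans (Nat.le_ceil _)
      exact_mod_cast this
    -- then every count is bounded by a fixed constant
    have hallbd : ∀ i t, n i t ≤ max (n i 0) (C + 1) := by
      intro i t
      induction t with
      | zero => exact le_max_left _ _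
      | succ t ih =>
        by_cases h : i = σ t
        · subst h
          rw [hupd_sel t]
          have := hselbd t
          omega
        · rw [hupd_other t i h]; exact ih
    -- contradiction with the growth of the total count
    set D : ℕ := ∑ i, max (n i 0) (C + 1) with hD
    have hle : ∀ t, (t : ℕ) ≤ D := by
      intro t
      calc t ≤ t + ∑ j, n j 0 := Nat.le_add_right _ _
        _ = ∑ j, n j t := (hsum t).symm
        _ ≤ D := Finset.sum_le_sum (fun i _ => hallbd i t)
    exact absurd (hle (D + 1)) (by omega)
  have htend : ∀ j, Tendsto (fun t => n j t) atTop atTop := by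
    intro j
    exact tendsto_atTop_atTop_of_monotone (hmono j) (fun b => hkey j b)
  refine ⟨htend, ?_⟩
  rw [tendsto_atTop]
  intro b
  have h : ∀ᶠ t in atTop, ∀ j : Fin k, b ≤ n j t :=
    eventually_all.mpr fun j => (htend j).eventually_ge_atTop b
  filter_upwards [h] with t ht
  exact Finset.le_inf' _ _ fun j _ => ht j
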